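/- arXiv:2103.12390 — 4 statements merged into one kernel-verified Lean document; each statement's English description precedes it below -/
import Mathlib

section
/- Let P : B^m → ℝ^n be a smooth function with P(0) = x̃ and DP(0) = A_0, where B^m is a neighborhood of 0 in ℝ^m invariant under e^{Λt} for t ≥ 0. Then P satisfies the conjugacy relation φ(t, P(θ)) = P(e^{Λt}θ) for all θ ∈ B^m and t ≥ 0 if and only if P solves the PDE λ_1 θ_1 ∂P/∂θ_1 + ... + λ_m θ_m ∂P/∂θ_m = g(P(θ)) for all θ ∈ B^m. -/
open Set Metric

private lemma clm_apply_sum {m n : ℕ} (L : (Fin m → ℝ) →L[ℝ] (Fin n → ℝ)) (v : Fin m → ℝ) :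
    L v = ∑ k, v k • L (Pi.single k 1) := by
  have hv : v = ∑ k, v k • (Pi.single k 1 : Fin m → ℝ) := by
    funext i
    simp [Finset.sum_apply, Pi.single_apply]
  calc L v = L (∑ k, v k • (Pi.single k 1 : Fin m → ℝ)) := by rw [← hv]
    _ = ∑ k, v k • L (Pi.single k 1) := by
        rw [map_sum]; exact Finset.sum_congr rfl fun k _ => L.map_smul _ _

/-- Parameterization method lemma: a smooth `P` with `P 0 = x̃` and
`DP(0) = A₀` satisfies the flow conjugacy `φ(t, P θ) = P (e^{Λt} θ)`
(for `t ≥ 0`, `θ ∈ B`) if and only if it solves the invariance PDE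
`Σ_k λ_k θ_k ∂P/∂θ_k = g ∘ P` on `B`. -/
theorem stmt_2 {n m : ℕ}
    (g : (Fin n → ℝ) → (Fin n → ℝ)) (hg : ContDiff ℝ (⊤ : ℕ∞) g)
    (φ : ℝ → (Fin n → ℝ) → (Fin n → ℝ))
    (hφ0 : ∀ x, φ 0 x = x)
    (hφ : ∀ x t, HasDerivAt (fun s => φ s x) (g (φ t x)) t)
    (xt : Fin n → ℝ) (hxt : g xt = 0)
    (lam : Fin m → ℝ) (hlam : ∀ k, lam k < 0)
    (ξ : Fin m → (Fin n → ℝ))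
    (heig : ∀ k, fderiv ℝ g xt (ξ k) = lam k • ξ k)
    (A0 : (Fin m → ℝ) →L[ℝ] (Fin n → ℝ))
    (hA0 : ∀ k, A0 (Pi.single k 1) = ξ k)
    (B : Set (Fin m → ℝ)) (hB : IsOpen B) (h0B : (0 : Fin m → ℝ) ∈ B)
    (hBinv : ∀ θ ∈ B, ∀ t : ℝ, 0 ≤ t → (fun i => Real.exp (lam i * t) * θ i) ∈ B)
    (P : (Fin m → ℝ) → (Fin n → ℝ)) (hP : ContDiffOn ℝ (⊤ : ℕ∞) P B)
    (hP0 : P 0 = xt) (hDP : fderiv ℝ P 0 = A0) :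
    (∀ θ ∈ B, ∀ t : ℝ, 0 ≤ t →
        φ t (P θ) = P (fun i => Real.exp (lam i * t) * θ i)) ↔
    (∀ θ ∈ B, (∑ k, (lam k * θ k) • fderiv ℝ P θ (Pi.single k 1)) = g (P θ)) := by
  -- the exponential curve and its derivative
  have hc : ∀ (θ : Fin m → ℝ) (t : ℝ),
      HasDerivAt (fun s : ℝ => (fun i => Real.exp (lam i * s) * θ i))
        (fun i => lam i * (Real.exp (lam i * t) * θ i)) t := by
    intro θ t
    rw [hasDerivAt_pi]
    intro i
    have h1 : HasDerivAt (fun s : ℝ => lam i * s) (lam i) t := by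
      simpa using (hasDerivAt_id t).const_mul (lam i)
    have h2 := (h1.exp).mul_const (θ i)
    exact h2.congr_deriv (by ring)
  have hPdiff : ∀ θ ∈ B, HasFDerivAt P (fderiv ℝ P θ) θ := fun θ hθ =>
    ((hP.contDiffAt (hB.mem_nhds hθ)).differentiableAt (by simp)).hasFDerivAt
  constructor
  · -- conjugacy → PDE
    intro hconj θ hθ
    have hc0 : (fun i => Real.exp (lam i * 0) * θ i) = θ := by
      funext i; simp
    -- derivative of s ↦ P (c s) at 0
    have hy : HasDerivAt (fun s : ℝ => P (fun i => Real.exp (lam i * s) * θ i))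
        (fderiv ℝ P θ (fun i => lam i * θ i)) 0 := by
      have := HasFDerivAt.comp_hasDerivAt_of_eq 0 (hPdiff θ hθ) (hc θ 0) hc0.symm
      exact this.congr_deriv (by congr 1; funext i; simp)
    -- derivative of s ↦ φ s (P θ) at 0
    have hx : HasDerivAt (fun s : ℝ => φ s (P θ)) (g (P θ)) 0 := by
      have := hφ (P θ) 0
      rwa [hφ0] at this
    have heqOn : EqOn (fun s : ℝ => φ s (P θ))
        (fun s : ℝ => P (fun i => Real.exp (lam i * s) * θ i)) (Ici 0) :=
      fun s hs => hconj θ hθ s hs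
    have hmem : (0:ℝ) ∈ Ici (0:ℝ) := self_mem_Ici
    have hu : UniqueDiffWithinAt ℝ (Ici (0:ℝ)) 0 := uniqueDiffOn_Ici 0 0 hmem
    have hx' : HasDerivWithinAt (fun s : ℝ => P (fun i => Real.exp (lam i * s) * θ i))
        (g (P θ)) (Ici 0) 0 := by
      have h0 : φ 0 (P θ) = P (fun i => Real.exp (lam i * 0) * θ i) := heqOn hmem
      exact (hx.hasDerivWithinAt).congr (fun s hs => (heqOn hs).symm) h0.symm
    have hy' := hy.hasDerivWithinAt (s := Ici (0:ℝ))
    have key : g (P θ) = fderiv ℝ P θ (fun i => lam i * θ i) := by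
      rw [← hx'.derivWithin hu, ← hy'.derivWithin hu]
    rw [clm_apply_sum (fderiv ℝ P θ) (fun i => lam i * θ i)] at key
    exact key.symm
  · -- PDE → conjugacy
    intro hpde θ hθ t₀ ht₀
    set c : ℝ → Fin m → ℝ := fun s i => Real.exp (lam i * s) * θ i with hcdef
    have hcB : ∀ s : ℝ, 0 ≤ s → c s ∈ B := fun s hs => hBinv θ hθ s hs
    have hccont : Continuous c := by
      apply continuous_pi
      intro i
      exact ((Real.continuous_exp.comp ((continuous_const.mul continuous_id)))).mul
        continuous_const
    -- the two candidate solutions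
    set x : ℝ → Fin n → ℝ := fun s => φ s (P θ) with hxdef
    set y : ℝ → Fin n → ℝ := fun s => P (c s) with hydef
    have hycont : ContinuousOn y (Icc 0 t₀) := by
      apply (hP.continuousOn).comp hccont.continuousOn
      intro s hs
      exact hcB s hs.1
    have hxcont : ContinuousOn x (Icc 0 t₀) :=
      fun s _ => (hφ (P θ) s).continuousAt.continuousWithinAt
    -- y solves the ODE
    have hy' : ∀ s ∈ Ico (0:ℝ) t₀, HasDerivAt y (g (y s)) s := by
      intro s hs
      have hmemB : c s ∈ B := hcB s hs.1
      have hcomp : HasDerivAt y (fderiv ℝ P (c s) (fun i => lam i * (c s i))) s := by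
        exact HasFDerivAt.comp_hasDerivAt s (hPdiff (c s) hmemB) (hc θ s)
      have : fderiv ℝ P (c s) (fun i => lam i * (c s i)) = g (y s) := by
        rw [clm_apply_sum (fderiv ℝ P (c s)) (fun i => lam i * (c s i))]
        exact hpde (c s) hmemB
      rwa [this] at hcomp
    -- x solves the ODE
    have hx' : ∀ s ∈ Ico (0:ℝ) t₀, HasDerivAt x (g (x s)) s := fun s _ => hφ (P θ) s
    -- initial condition
    have hinit : x 0 = y 0 := by
      have hc0 : c 0 = θ := by funext i; simp [hcdef]
      simp [hxdef, hydef, hφ0, hc0]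
    -- a compact convex region containing both trajectories
    have hKx : IsCompact (x '' Icc 0 t₀) := (isCompact_Icc).image_of_continuousOn hxcont
    have hKy : IsCompact (y '' Icc 0 t₀) := (isCompact_Icc).image_of_continuousOn hycont
    obtain ⟨R, hR⟩ := (hKx.union hKy).isBounded.subset_closedBall 0
    -- g is Lipschitz on the closed ball
    obtain ⟨C, hC⟩ := (isCompact_closedBall (0 : Fin n → ℝ) R).exists_bound_of_continuousOn
      ((hg.continuous_fderiv (by simp)).continuousOn)
    have hgdiff : Differentiable ℝ g := hg.differentiable (by simp)
    have hlip : LipschitzOnWith C.toNNReal g (closedBall (0 : Fin n → ℝ) R) := by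
      apply Convex.lipschitzOnWith_of_nnnorm_fderiv_le (fun z _ => hgdiff z)
        (fun z hz => ?_) (convex_closedBall 0 R)
      have := hC z hz
      rw [← norm_toNNReal]
      exact Real.toNNReal_mono this
    -- uniqueness of ODE solutions
    have huniq := ODE_solution_unique_of_mem_Icc_right
      (v := fun _ z => g z) (s := fun _ => closedBall (0 : Fin n → ℝ) R)
      (fun _ _ => hlip) hxcont
      (fun s hs => (hx' s hs).hasDerivWithinAt)
      (fun s hs => hR (Or.inl ⟨s, Ico_subset_Icc_self hs, rfl⟩))
      hycont
      (fun s hs => (hy' s hs).hasDerivWithinAt)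
      (fun s hs => hR (Or.inr ⟨s, Ico_subset_Icc_self hs, rfl⟩))
      hinit
    exact huniq ⟨ht₀, le_refl t₀⟩
end

section
/- Any smooth function P : B^m → ℝ^n satisfying DP(0) = A_0 (with A_0 of full rank m) and the conjugacy relation φ(t, P(θ)) = P(e^{Λt}θ) for all θ ∈ B^m and t ≥ 0 is injective on B^m. -/
/-- Any smooth `P` with injective `DP(0) = A₀` (full rank) satisfying the flow
conjugacy `φ(t, P θ) = P (e^{Λt} θ)` for `t ≥ 0` is injective on `B`. -/
theorem stmt_3 {n m : ℕ}
    (g : (Fin n → ℝ) → (Fin n → ℝ)) (hg : ContDiff ℝ (⊤ : ℕ∞) g)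
    (φ : ℝ → (Fin n → ℝ) → (Fin n → ℝ))
    (hφ0 : ∀ x, φ 0 x = x)
    (hφ : ∀ x t, HasDerivAt (fun s => φ s x) (g (φ t x)) t)
    (xt : Fin n → ℝ) (hxt : g xt = 0)
    (lam : Fin m → ℝ) (hlam : ∀ k, lam k < 0)
    (B : Set (Fin m → ℝ)) (hB : IsOpen B) (h0B : (0 : Fin m → ℝ) ∈ B)
    (hBinv : ∀ θ ∈ B, ∀ t : ℝ, 0 ≤ t → (fun i => Real.exp (lam i * t) * θ i) ∈ B)
    (P : (Fin m → ℝ) → (Fin n → ℝ)) (hP : ContDiffOn ℝ (⊤ : ℕ∞) P B)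
    (hP0 : P 0 = xt)
    (A0 : (Fin m → ℝ) →L[ℝ] (Fin n → ℝ))
    (hDP : fderiv ℝ P 0 = A0) (hA0inj : Function.Injective A0)
    (hconj : ∀ θ ∈ B, ∀ t : ℝ, 0 ≤ t →
        φ t (P θ) = P (fun i => Real.exp (lam i * t) * θ i)) :
    Set.InjOn P B := by
  -- antilipschitz constant for A0
  obtain ⟨K, hKpos, hK⟩ :=
    (A0 : (Fin m → ℝ) →ₗ[ℝ] (Fin n → ℝ)).exists_antilipschitzWith
      (LinearMap.ker_eq_bot.mpr hA0inj)
  -- strict derivative of P at 0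
  have hstrict : HasStrictFDerivAt P A0 0 := by
    have h1 : ContDiffAt ℝ (⊤ : ℕ∞) P 0 := hP.contDiffAt (hB.mem_nhds h0B)
    have := h1.hasStrictFDerivAt (by simp)
    rwa [hDP] at this
  -- local injectivity on a neighborhood s of 0
  set c : NNReal := (2 * K)⁻¹ with hc
  have hcpos : 0 < c := by positivity
  obtain ⟨s, hs_nhds, hs⟩ := hstrict.approximates_deriv_on_nhds (Or.inr hcpos)
  have hinj : Set.InjOn P s := by
    intro x hx y hy hxy
    have h1 : ‖P x - P y - A0 (x - y)‖ ≤ c * ‖x - y‖ := hs x hx y hy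
    rw [hxy, sub_self, zero_sub, norm_neg] at h1
    have h2 : ‖x - y‖ ≤ K * ‖A0 (x - y)‖ := by
      have := hK.le_mul_dist (x - y) 0
      simpa [dist_eq_norm] using this
    have h3 : ‖x - y‖ ≤ K * (c * ‖x - y‖) :=
      h2.trans (by exact mul_le_mul_of_nonneg_left h1 K.coe_nonneg)
    have hKc : (K : ℝ) * c = 1 / 2 := by
      rw [hc]
      push_cast
      field_simp
    rw [← mul_assoc, hKc] at h3
    have : ‖x - y‖ ≤ 0 := by linarith
    have := le_antisymm this (norm_nonneg _)
    rwa [norm_sub_eq_zero_iff] at this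
  intro θ₁ hθ₁ θ₂ hθ₂ hPeq
  -- the scaled points tend to 0
  have htend : ∀ θ : Fin m → ℝ, Filter.Tendsto
      (fun t : ℝ => (fun i => Real.exp (lam i * t) * θ i)) Filter.atTop (nhds 0) := by
    intro θ
    rw [tendsto_pi_nhds]
    intro i
    have h1 : Filter.Tendsto (fun t : ℝ => lam i * t) Filter.atTop Filter.atBot :=
      (Filter.tendsto_const_mul_atBot_of_neg (hlam i)).mpr Filter.tendsto_id
    have h2 : Filter.Tendsto (fun t : ℝ => Real.exp (lam i * t)) Filter.atTop (nhds 0) :=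
      Real.tendsto_exp_atBot.comp h1
    simpa using h2.mul_const (θ i)
  have hev : ∀ᶠ t : ℝ in Filter.atTop,
      ((fun i => Real.exp (lam i * t) * θ₁ i) ∈ s ∧
       (fun i => Real.exp (lam i * t) * θ₂ i) ∈ s) ∧ 0 ≤ t := by
    refine (((htend θ₁).eventually_mem hs_nhds).and
      ((htend θ₂).eventually_mem hs_nhds)).and (Filter.eventually_ge_atTop 0)
  obtain ⟨t, ⟨h1s, h2s⟩, ht0⟩ := hev.exists
  have hc1 := hconj θ₁ hθ₁ t ht0
  have hc2 := hconj θ₂ hθ₂ t ht0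
  rw [hPeq] at hc1
  have : (fun i => Real.exp (lam i * t) * θ₁ i) = (fun i => Real.exp (lam i * t) * θ₂ i) :=
    hinj h1s h2s (hc1.symm.trans hc2)
  funext i
  have := congrFun this i
  exact mul_left_cancel₀ (Real.exp_ne_zero _) this
end

section
/- Newton–Kantorovich-type theorem (radii polynomial approach): Let X, X' be Banach spaces, A† ∈ B(X,X'), A ∈ B(X',X) with A injective, and F : X → X' Fréchet differentiable at ā ∈ X with AF : X → X. Suppose nonnegative constants Y_0, Z_0, Z_1 and a function Z_2 : (0,∞) → (0,∞) satisfy ‖AF(ā)‖_X ≤ Y_0, ‖I − AA†‖_{B(X)} ≤ Z_0, ‖A[DF(ā) − A†]‖_{B(X)} ≤ Z_1, and ‖A[DF(c) − DF(ā)]‖_{B(X)} ≤ Z_2(r)·r for all c in the closed ball B_r(ā) and all r > 0. If there exists r_0 > 0 such that Z_2(r_0)r_0² − (1 − Z_1 − Z_0)r_0 + Y_0 < 0, then there exists a unique ã ∈ B_{r_0}(ā) with F(ã) = 0. -/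
/-!
The map `T x = x - A (F x)` has derivative `I - A DF(c)`, which splits as
`(I - A A†) - A (DF(ā) - A†) - A (DF(c) - DF(ā))` and so has norm at most
`κ = Z₀ + Z₁ + Z₂(r₀) r₀` on `B_{r₀}(ā)`. Negativity of the radii polynomial says exactly
`Y₀ + κ r₀ < r₀`, so `T` maps the ball into itself and is a contraction there. Banach's
fixed-point theorem gives a unique fixed point, and fixed points of `T` are the zeros of `F`
because `A` is injective.
-/

open Metric Set
open scoped NNReal

theorem LipschitzOnWith.existsUnique_fixedPoint_mem_closedBall {α : Type*} [MetricSpace α]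
    [CompleteSpace α] {g : α → α} {K : ℝ≥0} {a : α} {r : ℝ}
    (hg : LipschitzOnWith K g (closedBall a r)) (hK : K < 1) (ha : dist (g a) a + K * r ≤ r) :
    ∃! x, x ∈ closedBall a r ∧ g x = x := by
  have hK' : (K : ℝ) < 1 := hK
  have hr : 0 ≤ r := by nlinarith [dist_nonneg (x := g a) (y := a)]
  have ha_mem : a ∈ closedBall a r := mem_closedBall_self hr
  have hmaps : MapsTo g (closedBall a r) (closedBall a r) := fun x hx =>
    calc dist (g x) a ≤ dist (g x) (g a) + dist (g a) a := dist_triangle _ _ _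
      _ ≤ K * dist x a + dist (g a) a := by gcongr; exact hg.dist_le_mul x hx a ha_mem
      _ ≤ K * r + dist (g a) a := by gcongr; exact hx
      _ ≤ r := by linarith
  have hcontr : ContractingWith K (hmaps.restrict g _ _) := ⟨hK, fun x y => hg x.2 y.2⟩
  obtain ⟨x, hx, hfix, -⟩ := hcontr.exists_fixedPoint' isClosed_closedBall.isComplete hmaps
    ha_mem (edist_ne_top _ _)
  refine ⟨x, ⟨hx, hfix⟩, fun y ⟨hy, hgy⟩ => ?_⟩
  have hyx := hg.dist_le_mul y hy x hx
  rw [hgy, hfix.eq] at hyx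
  exact dist_le_zero.mp (by nlinarith [dist_nonneg (x := y) (y := x)])

theorem ContinuousLinearMap.norm_id_sub_comp_le {𝕜 E F : Type*} [NontriviallyNormedField 𝕜]
    [NormedAddCommGroup E] [NormedSpace 𝕜 E] [NormedAddCommGroup F] [NormedSpace 𝕜 F]
    (A : F →L[𝕜] E) (B C D : E →L[𝕜] F) :
    ‖ContinuousLinearMap.id 𝕜 E - A.comp C‖ ≤
      ‖ContinuousLinearMap.id 𝕜 E - A.comp B‖ + ‖A.comp (D - B)‖ + ‖A.comp (C - D)‖ := by
  have hsplit : ContinuousLinearMap.id 𝕜 E - A.comp C =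
      (ContinuousLinearMap.id 𝕜 E - A.comp B) - A.comp (D - B) - A.comp (C - D) := by
    ext x
    simp only [sub_apply, ContinuousLinearMap.comp_apply, map_sub]
    abel
  rw [hsplit]
  exact (norm_sub_le _ _).trans (add_le_add_left (norm_sub_le _ _) _)

theorem stmt_6_general {X X' : Type*}
    [NormedAddCommGroup X] [NormedSpace ℝ X] [CompleteSpace X]
    [NormedAddCommGroup X'] [NormedSpace ℝ X']
    (F : X → X') (DF : X → X →L[ℝ] X')
    (hDF : ∀ c : X, HasFDerivAt F (DF c) c)
    (Adag : X →L[ℝ] X') (A : X' →L[ℝ] X)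
    (hAinj : Function.Injective A)
    (abar : X) (Y₀ Z₀ Z₁ : ℝ) (Z₂ : ℝ → ℝ)
    (hY : ‖A (F abar)‖ ≤ Y₀)
    (hZ0 : ‖ContinuousLinearMap.id ℝ X - A.comp Adag‖ ≤ Z₀)
    (hZ1 : ‖A.comp (DF abar - Adag)‖ ≤ Z₁)
    (hZ2 : ∀ r : ℝ, 0 < r → ∀ c ∈ Metric.closedBall abar r,
      ‖A.comp (DF c - DF abar)‖ ≤ Z₂ r * r)
    (r₀ : ℝ) (hr₀ : 0 < r₀)
    (hp : Z₂ r₀ * r₀ ^ 2 - (1 - Z₁ - Z₀) * r₀ + Y₀ < 0) :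
    ∃! a : X, a ∈ Metric.closedBall abar r₀ ∧ F a = 0 := by
  set κ := Z₀ + Z₁ + Z₂ r₀ * r₀
  have hderiv_le : ∀ c ∈ closedBall abar r₀, ‖ContinuousLinearMap.id ℝ X - A.comp (DF c)‖ ≤ κ :=
    fun c hc => (A.norm_id_sub_comp_le Adag (DF c) (DF abar)).trans
      (add_le_add (add_le_add hZ0 hZ1) (hZ2 r₀ hr₀ c hc))
  have hκ : 0 ≤ κ := (norm_nonneg _).trans (hderiv_le abar (mem_closedBall_self hr₀.le))
  have hradii : Y₀ + κ * r₀ < r₀ := by linarith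
  have hlip : LipschitzOnWith (⟨κ, hκ⟩ : ℝ≥0) (fun x => x - A (F x)) (closedBall abar r₀) :=
    (convex_closedBall abar r₀).lipschitzOnWith_of_nnnorm_hasFDerivWithin_le
      (fun c _ => ((hasFDerivAt_id c).sub (A.hasFDerivAt.comp c (hDF c))).hasFDerivWithinAt)
      hderiv_le
  have hκ1 : κ < 1 := by nlinarith [(norm_nonneg _).trans hY]
  have hcenter : dist (abar - A (F abar)) abar + κ * r₀ ≤ r₀ := by
    rw [dist_eq_norm, sub_sub_cancel_left, norm_neg]; linarith
  refine (existsUnique_congr fun x => ?_).mp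
    (hlip.existsUnique_fixedPoint_mem_closedBall (show (⟨κ, hκ⟩ : ℝ≥0) < 1 from hκ1) hcenter)
  rw [sub_eq_self, map_eq_zero_iff A hAinj]

/-- Newton–Kantorovich-type theorem (radii polynomial approach): if the bounds
`Y₀, Z₀, Z₁, Z₂` satisfy the stated estimates and the radii polynomial is
negative at some `r₀ > 0`, then `F` has a unique zero in the closed ball
`B_{r₀}(ā)`. -/
theorem stmt_6 {X X' : Type*}
    [NormedAddCommGroup X] [NormedSpace ℝ X] [CompleteSpace X]
    [NormedAddCommGroup X'] [NormedSpace ℝ X']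
    (F : X → X') (DF : X → X →L[ℝ] X')
    (hDF : ∀ c : X, HasFDerivAt F (DF c) c)
    (Adag : X →L[ℝ] X') (A : X' →L[ℝ] X)
    (hAinj : Function.Injective A)
    (abar : X) (Y₀ Z₀ Z₁ : ℝ) (Z₂ : ℝ → ℝ)
    (hY₀ : 0 ≤ Y₀) (hZ₀ : 0 ≤ Z₀) (hZ₁ : 0 ≤ Z₁)
    (hZ₂pos : ∀ r : ℝ, 0 < r → 0 < Z₂ r)
    (hY : ‖A (F abar)‖ ≤ Y₀)
    (hZ0 : ‖ContinuousLinearMap.id ℝ X - A.comp Adag‖ ≤ Z₀)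
    (hZ1 : ‖A.comp (DF abar - Adag)‖ ≤ Z₁)
    (hZ2 : ∀ r : ℝ, 0 < r → ∀ c ∈ Metric.closedBall abar r,
      ‖A.comp (DF c - DF abar)‖ ≤ Z₂ r * r)
    (r₀ : ℝ) (hr₀ : 0 < r₀)
    (hp : Z₂ r₀ * r₀ ^ 2 - (1 - Z₁ - Z₀) * r₀ + Y₀ < 0) :
    ∃! a : X, a ∈ Metric.closedBall abar r₀ ∧ F a = 0 :=
  stmt_6_general F DF hDF Adag A hAinj abar Y₀ Z₀ Z₁ Z₂ hY hZ0 hZ1 hZ2 r₀ hr₀ hp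
end

section
/- Formal Taylor recursion for the parameterization: if P(θ) = Σ_{|α|≥0} a_α θ^α is a formal power series solution of the invariance PDE Σ_k λ_k θ_k ∂P/∂θ_k = g(P(θ)), then the coefficients satisfy (α·λ) a_α = (g(a))_α for every multi-index α, where (g(a))_α is the α-th Taylor coefficient of g∘P. If moreover the eigenvalues λ_1,...,λ_m are non-resonant (α·λ ≠ λ_j for all j and all |α| ≥ 2), then for each |α| ≥ 2 the coefficient a_α is uniquely determined by the lower-order coefficients via a_α = (α·λ − Dg(x̃))^{-1} · (nonlinear terms depending only on a_β with |β| < |α|). -/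
open MvPowerSeries Matrix

/-- The formal Euler-type operator `Σ_k λ_k θ_k ∂/∂θ_k` acting on formal
power series; on each monomial `θ^α` it acts by multiplication by
`α·λ = Σ_k α_k λ_k`. -/
noncomputable def eulerOp {m : ℕ} (lam : Fin m → ℝ)
    (f : MvPowerSeries (Fin m) ℝ) : MvPowerSeries (Fin m) ℝ :=
  fun α => (∑ i, (α i : ℝ) * lam i) * MvPowerSeries.coeff α f

/-!
Comparing the coefficients of `θ^α` in the invariance equation gives `(α·λ) a_α = (g ∘ P)_α`.
By the first-order Taylor formula, if two series agree below degree `s ≥ 1` then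
`g(Q) - g(P) - Dg(P)(Q - P)` vanishes below degree `2s`; so the `α`-coefficient of `g ∘ P`
depends on `a_α` only through `Dg(x̃) a_α`, and `(α·λ - Dg(x̃)) a_α` is determined by the lower
coefficients. Conjugated to diagonal form this matrix is invertible: `α·λ < 0` is not a stable
eigenvalue by non-resonance, and cannot equal a nonnegative one. Induction on `|α|` gives
uniqueness.
-/

open Finsupp (degree)

namespace MvPowerSeries

variable {σ R : Type*} [CommRing R]

theorem le_order_sum {ι : Type*} {s : Finset ι} {f : ι → MvPowerSeries σ R} {n : ℕ∞}
    (hf : ∀ i ∈ s, n ≤ (f i).order) : n ≤ (∑ i ∈ s, f i).order :=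
  Finset.sum_induction f (fun g => n ≤ g.order)
    (fun _ _ hg hh => (le_min hg hh).trans min_order_le_add) (by simp) hf

theorem coeff_mul_eq_constantCoeff_mul {f h : MvPowerSeries σ R} {α : σ →₀ ℕ}
    (hα : ((degree α : ℕ) : ℕ∞) ≤ h.order) : coeff α (f * h) = constantCoeff f * coeff α h := by
  classical
  rw [coeff_mul, Finset.sum_eq_single (0, α)]
  · rw [coeff_zero_eq_constantCoeff_apply]
  · rintro ⟨β, γ⟩ hβγ hne
    rw [Finset.HasAntidiagonal.mem_antidiagonal] at hβγ
    dsimp only at hβγ ⊢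
    have hβ : β ≠ 0 := by rintro rfl; simp_all
    have hγ : degree γ < degree α := by
      rw [← hβγ, map_add]
      have := (Finsupp.degree_eq_zero_iff β).not.mpr hβ
      omega
    rw [coeff_of_lt_order (lt_of_lt_of_le (by exact_mod_cast hγ) hα), mul_zero]
  · simp

end MvPowerSeries

namespace MvPolynomial

variable {σ ι R : Type*} [CommRing R]

theorem constantCoeff_aeval (P : ι → MvPowerSeries σ R) (p : MvPolynomial ι R) :
    MvPowerSeries.constantCoeff (aeval P p) =
      eval (fun k => MvPowerSeries.constantCoeff (P k)) p := by
  rw [aeval_def, eval₂_comp_left]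
  congr

variable [Fintype ι]

theorem le_order_aeval_sub_aeval_sub_sum {P Q : ι → MvPowerSeries σ R} {s : ℕ∞}
    (hs : ∀ k, s ≤ (Q k - P k).order) (p : MvPolynomial ι R) :
    s + s ≤ (aeval Q p - aeval P p - ∑ k, aeval P (pderiv k p) * (Q k - P k)).order := by
  classical
  induction p using MvPolynomial.induction_on with
  | C a => simp
  | add p q hp hq =>
    have hsplit : aeval Q (p + q) - aeval P (p + q) - ∑ k, aeval P (pderiv k (p + q)) * (Q k - P k)
        = (aeval Q p - aeval P p - ∑ k, aeval P (pderiv k p) * (Q k - P k))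
          + (aeval Q q - aeval P q - ∑ k, aeval P (pderiv k q) * (Q k - P k)) := by
      simp only [map_add, add_mul, Finset.sum_add_distrib]
      ring
    rw [hsplit]
    exact (le_min hp hq).trans min_order_le_add
  | mul_X p i hp =>
    set E := aeval Q p - aeval P p - ∑ k, aeval P (pderiv k p) * (Q k - P k)
    have hsplit : aeval Q (p * X i) - aeval P (p * X i)
          - ∑ k, aeval P (pderiv k (p * X i)) * (Q k - P k)
        = E * P i + (E + ∑ k, aeval P (pderiv k p) * (Q k - P k)) * (Q i - P i) := by
      have hderiv : ∀ k, aeval P (pderiv k (p * X i))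
          = aeval P (pderiv k p) * P i + if k = i then aeval P p else 0 := by
        intro k
        rw [pderiv_mul, pderiv_X]
        split_ifs with hki <;> simp [hki]
      simp only [hderiv, add_mul, ite_mul, zero_mul, Finset.sum_add_distrib, Finset.sum_ite_eq',
        Finset.mem_univ, if_true, map_mul, aeval_X, E]
      simp only [mul_right_comm _ (P i), ← Finset.sum_mul]
      ring
    have hlin : s ≤ (E + ∑ k, aeval P (pderiv k p) * (Q k - P k)).order := by
      refine (le_min (le_self_add.trans hp) (le_order_sum fun k _ => ?_)).trans min_order_le_add
      exact le_add_self.trans ((add_le_add_right (hs k) _).trans le_order_mul)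
    rw [hsplit]
    refine le_trans (le_min ?_ ?_) min_order_le_add
    · exact (hp.trans le_self_add).trans le_order_mul
    · exact (add_le_add hlin (hs i)).trans le_order_mul

theorem coeff_aeval_sub_coeff_aeval {P Q : ι → MvPowerSeries σ R} {α : σ →₀ ℕ} (hα : α ≠ 0)
    (hQP : ∀ k, ((degree α : ℕ) : ℕ∞) ≤ (Q k - P k).order) (p : MvPolynomial ι R) :
    MvPowerSeries.coeff α (aeval Q p) - MvPowerSeries.coeff α (aeval P p) =
      ∑ k, eval (fun k => MvPowerSeries.constantCoeff (P k)) (pderiv k p) *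
        MvPowerSeries.coeff α (Q k - P k) := by
  have hpos : 0 < degree α := Nat.pos_of_ne_zero ((Finsupp.degree_eq_zero_iff α).not.mpr hα)
  have hrem := coeff_of_lt_order <| lt_of_lt_of_le (by exact_mod_cast Nat.lt_add_of_pos_left hpos)
    (le_order_aeval_sub_aeval_sub_sum hQP p)
  rw [map_sub, map_sub, map_sum, sub_eq_zero] at hrem
  rw [hrem]
  refine Finset.sum_congr rfl fun k _ => ?_
  rw [coeff_mul_eq_constantCoeff_mul (hQP k), constantCoeff_aeval]

end MvPolynomial

theorem coeff_eulerOp {m : ℕ} (lam : Fin m → ℝ) (f : MvPowerSeries (Fin m) ℝ) (α : Fin m →₀ ℕ) :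
    coeff α (eulerOp lam f) = (∑ i, (α i : ℝ) * lam i) * coeff α f := rfl

section Eigenvalues

variable {κ ι K : Type*} [Fintype κ] [Ring K] [LinearOrder K] [IsStrictOrderedRing K]

theorem sum_mul_neg_of_ne_zero {lam : κ → K} (hlam : ∀ k, lam k < 0) {α : κ →₀ ℕ} (hα : α ≠ 0) :
    ∑ i, (α i : K) * lam i < 0 := by
  obtain ⟨i₀, hi₀⟩ := Finsupp.ne_iff.mp hα
  simpa using Finset.sum_lt_sum (g := fun _ => (0 : K))
    (fun i _ => mul_nonpos_of_nonneg_of_nonpos (Nat.cast_nonneg _) (hlam i).le)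
    ⟨i₀, Finset.mem_univ _,
      mul_neg_of_pos_of_neg (by simpa [Nat.pos_iff_ne_zero] using hi₀) (hlam i₀)⟩

theorem sum_mul_ne_of_nonresonant {lam : κ → K} (hlam : ∀ k, lam k < 0) {μ : ι → K} {e : κ → ι}
    (he : ∀ k, μ (e k) = lam k) (hstable : ∀ i, μ i < 0 → ∃ k, e k = i) {α : κ →₀ ℕ}
    (hα : α ≠ 0) (hNR : ∀ k, ∑ i, (α i : K) * lam i ≠ lam k) (i : ι) :
    ∑ i, (α i : K) * lam i ≠ μ i := by
  by_cases hμ : μ i < 0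
  · obtain ⟨k, rfl⟩ := hstable i hμ
    rw [he]
    exact hNR k
  · exact ((sum_mul_neg_of_ne_zero hlam hα).trans_le (not_lt.mp hμ)).ne

end Eigenvalues

theorem Matrix.isUnit_smul_one_sub_conj_diagonal {ι K : Type*} [Fintype ι] [DecidableEq ι]
    [Field K] {C : Matrix ι ι K} (hC : IsUnit C) {μ : ι → K} {c : K} (hc : ∀ i, c ≠ μ i) :
    IsUnit (c • (1 : Matrix ι ι K) - C * diagonal μ * C⁻¹) := by
  have hconj : c • (1 : Matrix ι ι K) - C * diagonal μ * C⁻¹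
      = C * diagonal (fun i => c - μ i) * C⁻¹ := by
    rw [← diagonal_sub, ← smul_one_eq_diagonal, Matrix.mul_sub, Matrix.sub_mul, Matrix.mul_smul,
      Matrix.mul_one, Matrix.smul_mul, mul_nonsing_inv C ((isUnit_iff_isUnit_det C).mp hC)]
  rw [hconj, isUnit_iff_isUnit_det, det_conj hC, det_diagonal, isUnit_iff_ne_zero]
  exact Finset.prod_ne_zero_iff.mpr fun i _ => sub_ne_zero.mpr (hc i)

section Uniqueness

variable {m n : ℕ} {lam : Fin m → ℝ} {g : Fin n → MvPolynomial (Fin n) ℝ}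
  {J : Matrix (Fin n) (Fin n) ℝ} {P Q : Fin n → MvPowerSeries (Fin m) ℝ}

theorem mulVec_coeff_sub_eq_zero (hP : ∀ j, eulerOp lam (P j) = MvPolynomial.aeval P (g j))
    (hQ : ∀ j, eulerOp lam (Q j) = MvPolynomial.aeval Q (g j))
    (hJ : ∀ i j, J i j =
      MvPolynomial.eval (fun k => constantCoeff (P k)) (MvPolynomial.pderiv j (g i)))
    {α : Fin m →₀ ℕ} (hα : α ≠ 0) (hQP : ∀ k, ((degree α : ℕ) : ℕ∞) ≤ (Q k - P k).order) :
    ((∑ i, (α i : ℝ) * lam i) • (1 : Matrix (Fin n) (Fin n) ℝ) - J) *ᵥ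
      (fun k => coeff α (Q k - P k)) = 0 := by
  funext j
  have hlin := MvPolynomial.coeff_aeval_sub_coeff_aeval hα hQP (g j)
  rw [← hP, ← hQ, coeff_eulerOp, coeff_eulerOp, ← mul_sub, ← map_sub] at hlin
  rw [sub_mulVec, smul_mulVec, one_mulVec]
  simp only [Pi.sub_apply, Pi.smul_apply, smul_eq_mul, Pi.zero_apply, hlin, mulVec, dotProduct, hJ,
    sub_self]

theorem eq_of_coeff_eq_of_degree_le_one
    (hP : ∀ j, eulerOp lam (P j) = MvPolynomial.aeval P (g j))
    (hQ : ∀ j, eulerOp lam (Q j) = MvPolynomial.aeval Q (g j))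
    (hJ : ∀ i j, J i j =
      MvPolynomial.eval (fun k => constantCoeff (P k)) (MvPolynomial.pderiv j (g i)))
    (hunit : ∀ α : Fin m →₀ ℕ, 2 ≤ degree α →
      IsUnit ((∑ i, (α i : ℝ) * lam i) • (1 : Matrix (Fin n) (Fin n) ℝ) - J))
    (hlow : ∀ α : Fin m →₀ ℕ, degree α ≤ 1 → ∀ j, coeff α (Q j) = coeff α (P j)) :
    Q = P := by
  have hord : ∀ s : ℕ, ∀ j, (s : ℕ∞) ≤ (Q j - P j).order := by
    intro s
    induction s with
    | zero => simp
    | succ s ih =>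
      intro j
      refine nat_le_order fun α hα => ?_
      rcases (Nat.lt_succ_iff.mp hα).lt_or_eq with hlt | rfl
      · exact coeff_of_lt_order ((Nat.cast_lt.mpr hlt).trans_le (ih j))
      by_cases hα1 : degree α ≤ 1
      · rw [map_sub, hlow α hα1, sub_self]
      have hα0 : α ≠ 0 := by rintro rfl; simp at hα1
      exact congrFun ((mulVec_injective_iff_isUnit.mpr (hunit α (by omega))).eq_iff.mp
        ((mulVec_coeff_sub_eq_zero hP hQ hJ hα0 ih).trans (mulVec_zero _).symm)) j
  funext j
  exact sub_eq_zero.mp (order_eq_top_iff.mp (ENat.eq_top_iff_forall_ge.mpr (hord · j)))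

end Uniqueness

theorem stmt_15_general {m n : ℕ}
    (lam : Fin m → ℝ) (hlamneg : ∀ k, lam k < 0)
    (g : Fin n → MvPolynomial (Fin n) ℝ)
    (xt : Fin n → ℝ)
    (J : Matrix (Fin n) (Fin n) ℝ)
    (hJ : ∀ i j, J i j = MvPolynomial.eval xt (MvPolynomial.pderiv j (g i)))
    (μ : Fin n → ℝ) (C : Matrix (Fin n) (Fin n) ℝ) (hC : IsUnit C)
    (hdiag : J = C * Matrix.diagonal μ * C⁻¹)
    (ι : Fin m ↪ Fin n) (hι : ∀ k, μ (ι k) = lam k)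
    (hstable : ∀ i, μ i < 0 → ∃ k, ι k = i)
    (hNR : ∀ α : Fin m →₀ ℕ, 2 ≤ α.sum (fun _ e => e) →
      ∀ k, (∑ i, (α i : ℝ) * lam i) ≠ lam k)
    (P : Fin n → MvPowerSeries (Fin m) ℝ)
    (hP0 : ∀ j, MvPowerSeries.coeff 0 (P j) = xt j)
    (hPDE : ∀ j, eulerOp lam (P j) = MvPolynomial.aeval P (g j)) :
    (∀ j, ∀ α : Fin m →₀ ℕ,
        (∑ i, (α i : ℝ) * lam i) * MvPowerSeries.coeff α (P j) =
          MvPowerSeries.coeff α (MvPolynomial.aeval P (g j))) ∧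
    (∀ α : Fin m →₀ ℕ, 2 ≤ α.sum (fun _ e => e) →
        IsUnit ((∑ i, (α i : ℝ) * lam i) • (1 : Matrix (Fin n) (Fin n) ℝ) - J)) ∧
    (∀ α : Fin m →₀ ℕ, 2 ≤ α.sum (fun _ e => e) →
        (fun j => MvPowerSeries.coeff α (P j)) =
          ((∑ i, (α i : ℝ) * lam i) • (1 : Matrix (Fin n) (Fin n) ℝ) - J)⁻¹ *ᵥ
            (fun j => MvPowerSeries.coeff α (MvPolynomial.aeval P (g j))
              - (J *ᵥ fun j' => MvPowerSeries.coeff α (P j')) j)) ∧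
    (∀ Q : Fin n → MvPowerSeries (Fin m) ℝ,
        (∀ j, eulerOp lam (Q j) = MvPolynomial.aeval Q (g j)) →
        (∀ α : Fin m →₀ ℕ, α.sum (fun _ e => e) ≤ 1 →
          ∀ j, MvPowerSeries.coeff α (Q j) = MvPowerSeries.coeff α (P j)) →
        Q = P) := by
  have hrec : ∀ j α,
      (∑ i, (α i : ℝ) * lam i) * coeff α (P j) = coeff α (MvPolynomial.aeval P (g j)) :=
    fun j α => by rw [← coeff_eulerOp, hPDE]
  have hunit : ∀ α : Fin m →₀ ℕ, 2 ≤ degree α →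
      IsUnit ((∑ i, (α i : ℝ) * lam i) • (1 : Matrix (Fin n) (Fin n) ℝ) - J) := fun α hα =>
    hdiag ▸ isUnit_smul_one_sub_conj_diagonal hC (sum_mul_ne_of_nonresonant hlamneg hι hstable
      (by rintro rfl; simp at hα) (hNR α hα))
  have hJP : ∀ i j, J i j =
      MvPolynomial.eval (fun k => constantCoeff (P k)) (MvPolynomial.pderiv j (g i)) := by
    simpa only [← coeff_zero_eq_constantCoeff_apply, hP0] using hJ
  refine ⟨hrec, hunit, fun α hα => ?_,
    fun Q hQ hlow => eq_of_coeff_eq_of_degree_le_one hPDE hQ hJP hunit hlow⟩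
  have := (hunit α hα).invertible
  refine (inv_mulVec_eq_vec ?_).symm
  funext j
  rw [sub_mulVec, smul_mulVec, one_mulVec, Pi.sub_apply, Pi.smul_apply, smul_eq_mul, hrec]

/-- Formal Taylor recursion for the parameterization: a formal power series
solution `P` of `Σ_k λ_k θ_k ∂P/∂θ_k = g(P)` has coefficients satisfying
`(α·λ) a_α = (g(a))_α`; and under non-resonance the matrix
`(α·λ)·I - Dg(x̃)` is invertible for `|α| ≥ 2`, the coefficient `a_α` is
recovered from the nonlinear terms through its inverse, and the coefficients
of order `≥ 2` are uniquely determined by those of order `≤ 1`. -/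
theorem stmt_15 {m n : ℕ}
    (lam : Fin m → ℝ) (hlamneg : ∀ k, lam k < 0)
    (g : Fin n → MvPolynomial (Fin n) ℝ)
    (xt : Fin n → ℝ) (hxt : ∀ j, MvPolynomial.eval xt (g j) = 0)
    (J : Matrix (Fin n) (Fin n) ℝ)
    (hJ : ∀ i j, J i j = MvPolynomial.eval xt (MvPolynomial.pderiv j (g i)))
    (μ : Fin n → ℝ) (C : Matrix (Fin n) (Fin n) ℝ) (hC : IsUnit C)
    (hdiag : J = C * Matrix.diagonal μ * C⁻¹)
    (hμdist : Function.Injective μ) (hμnz : ∀ i, μ i ≠ 0)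
    (ι : Fin m ↪ Fin n) (hι : ∀ k, μ (ι k) = lam k)
    (hstable : ∀ i, μ i < 0 → ∃ k, ι k = i)
    (hNR : ∀ α : Fin m →₀ ℕ, 2 ≤ α.sum (fun _ e => e) →
      ∀ k, (∑ i, (α i : ℝ) * lam i) ≠ lam k)
    (P : Fin n → MvPowerSeries (Fin m) ℝ)
    (hP0 : ∀ j, MvPowerSeries.coeff 0 (P j) = xt j)
    (hPDE : ∀ j, eulerOp lam (P j) = MvPolynomial.aeval P (g j)) :
    (∀ j, ∀ α : Fin m →₀ ℕ,
        (∑ i, (α i : ℝ) * lam i) * MvPowerSeries.coeff α (P j) =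
          MvPowerSeries.coeff α (MvPolynomial.aeval P (g j))) ∧
    (∀ α : Fin m →₀ ℕ, 2 ≤ α.sum (fun _ e => e) →
        IsUnit ((∑ i, (α i : ℝ) * lam i) • (1 : Matrix (Fin n) (Fin n) ℝ) - J)) ∧
    (∀ α : Fin m →₀ ℕ, 2 ≤ α.sum (fun _ e => e) →
        (fun j => MvPowerSeries.coeff α (P j)) =
          ((∑ i, (α i : ℝ) * lam i) • (1 : Matrix (Fin n) (Fin n) ℝ) - J)⁻¹ *ᵥ
            (fun j => MvPowerSeries.coeff α (MvPolynomial.aeval P (g j))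
              - (J *ᵥ fun j' => MvPowerSeries.coeff α (P j')) j)) ∧
    (∀ Q : Fin n → MvPowerSeries (Fin m) ℝ,
        (∀ j, eulerOp lam (Q j) = MvPolynomial.aeval Q (g j)) →
        (∀ α : Fin m →₀ ℕ, α.sum (fun _ e => e) ≤ 1 →
          ∀ j, MvPowerSeries.coeff α (Q j) = MvPowerSeries.coeff α (P j)) →
        Q = P) :=
  stmt_15_general lam hlamneg g xt J hJ μ C hC hdiag ι hι hstable hNR P hP0 hPDE
end
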